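/- For all integers q ≥ 1 and k ≥ 2, and all integers k' with 1 ≤ k' ≤ k/2, the inequality ∑_{i=0}^{k'−1} ( h_q(i) + h_{q−1}(i) ) ≤ ∑_{j=k−k'}^{k−1} h_q(j) holds. -/
import Mathlib


/-- `h i` is the number of ones in the binary representation of `i`. -/
def h (i : ℕ) : ℕ := (Nat.digits 2 i).sum

/-- `hq q i = C(h i, q)`. -/
def hq (q i : ℕ) : ℕ := (h i).choose q

lemma h_zero : h 0 = 0 := by simp [h]

lemma h_rec (i : ℕ) (hi : i ≠ 0) : h i = i % 2 + h (i / 2) := by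
  unfold h
  rw [Nat.digits_def' (by norm_num : 1 < 2) (Nat.pos_of_ne_zero hi)]
  simp

lemma h_two_mul (i : ℕ) : h (2 * i) = h i := by
  rcases Nat.eq_zero_or_pos i with rfl | hi
  · rfl
  · rw [h_rec (2 * i) (by omega)]
    simp [Nat.mul_div_cancel_left _ (by norm_num : 0 < 2), Nat.mul_mod_right]

lemma h_two_mul_add_one (i : ℕ) : h (2 * i + 1) = h i + 1 := by
  rw [h_rec (2 * i + 1) (by omega)]
  have h1 : (2 * i + 1) % 2 = 1 := by omega
  have h2 : (2 * i + 1) / 2 = i := by omega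
  rw [h1, h2]; omega

lemma h_pos : ∀ i : ℕ, 1 ≤ i → 1 ≤ h i := by
  intro i
  induction i using Nat.strong_induction_on with
  | _ i ih =>
    intro hi
    rcases Nat.even_or_odd i with ⟨m, hm⟩ | ⟨m, hm⟩
    · have hm' : i = 2 * m := by omega
      subst hm'
      rw [h_two_mul]
      exact ih m (by omega) (by omega)
    · subst hm
      rw [h_two_mul_add_one]
      omega

lemma sum_range_two_mul (t : ℕ → ℕ) (M : ℕ) :
    ∑ i ∈ Finset.range (2 * M), t i
      = ∑ i ∈ Finset.range M, (t (2 * i) + t (2 * i + 1)) := by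
  induction M with
  | zero => simp
  | succ n ihn =>
    rw [Finset.sum_range_succ, ← ihn,
      show 2 * (n + 1) = 2 * n + 1 + 1 by ring,
      Finset.sum_range_succ, Finset.sum_range_succ]
    omega

/-- Key lemma: for monotone `f` and `a ≥ L`,
`∑_{i<L} f (h i + 1) ≤ ∑_{i<L} f (h (a+i))`. -/
lemma key : ∀ L (f : ℕ → ℕ), Monotone f → ∀ a, L ≤ a →
    ∑ i ∈ Finset.range L, f (h i + 1) ≤ ∑ i ∈ Finset.range L, f (h (a + i)) := by
  intro L
  induction L using Nat.strong_induction_on with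
  | _ L ih =>
    intro f hf a ha
    set g : ℕ → ℕ := fun x => f (x + 1) with hg
    have hgmono : Monotone g := fun x y hxy => hf (by omega)
    rcases Nat.even_or_odd L with ⟨M, hM⟩ | ⟨M, hM⟩
    · -- L = 2 * M
      have hL : L = 2 * M := by omega
      subst hL
      rcases Nat.eq_zero_or_pos M with rfl | hMpos
      · simp
      have hlhs : ∑ i ∈ Finset.range (2 * M), f (h i + 1)
          = ∑ j ∈ Finset.range M, f (h j + 1) + ∑ j ∈ Finset.range M, g (h j + 1) :=
        calc ∑ i ∈ Finset.range (2 * M), f (h i + 1)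
            = ∑ j ∈ Finset.range M, (f (h (2 * j) + 1) + f (h (2 * j + 1) + 1)) :=
              sum_range_two_mul _ M
          _ = ∑ j ∈ Finset.range M, (f (h j + 1) + g (h j + 1)) :=
              Finset.sum_congr rfl fun j _ => by rw [h_two_mul, h_two_mul_add_one]
          _ = _ := Finset.sum_add_distrib
      rcases Nat.even_or_odd a with ⟨b, hb⟩ | ⟨b, hb⟩
      · -- a = 2 * b, b ≥ M
        have hab : a = 2 * b := by omega
        subst hab
        have hbM : M ≤ b := by omega
        have hrhs : ∑ i ∈ Finset.range (2 * M), f (h (2 * b + i))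
            = ∑ j ∈ Finset.range M, f (h (b + j)) + ∑ j ∈ Finset.range M, g (h (b + j)) :=
          calc ∑ i ∈ Finset.range (2 * M), f (h (2 * b + i))
              = ∑ j ∈ Finset.range M, (f (h (2 * b + 2 * j)) + f (h (2 * b + (2 * j + 1)))) :=
                sum_range_two_mul _ M
            _ = ∑ j ∈ Finset.range M, (f (h (b + j)) + g (h (b + j))) :=
                Finset.sum_congr rfl fun j _ => by
                  rw [show 2 * b + 2 * j = 2 * (b + j) by ring,
                    show 2 * b + (2 * j + 1) = 2 * (b + j) + 1 by ring,
                    h_two_mul, h_two_mul_add_one]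
            _ = _ := Finset.sum_add_distrib
        rw [hlhs, hrhs]
        exact Nat.add_le_add (ih M (by omega) f hf b hbM) (ih M (by omega) g hgmono b hbM)
      · -- a = 2 * b + 1, b ≥ M
        have hab : a = 2 * b + 1 := hb
        subst hab
        have hbM : M ≤ b := by omega
        have hrhs : ∑ i ∈ Finset.range (2 * M), f (h (2 * b + 1 + i))
            = ∑ j ∈ Finset.range M, g (h (b + j))
              + ∑ j ∈ Finset.range M, f (h (b + 1 + j)) :=
          calc ∑ i ∈ Finset.range (2 * M), f (h (2 * b + 1 + i))
              = ∑ j ∈ Finset.range M,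
                  (f (h (2 * b + 1 + 2 * j)) + f (h (2 * b + 1 + (2 * j + 1)))) :=
                sum_range_two_mul _ M
            _ = ∑ j ∈ Finset.range M, (g (h (b + j)) + f (h (b + 1 + j))) :=
                Finset.sum_congr rfl fun j _ => by
                  rw [show 2 * b + 1 + 2 * j = 2 * (b + j) + 1 by ring,
                    show 2 * b + 1 + (2 * j + 1) = 2 * (b + 1 + j) by ring,
                    h_two_mul, h_two_mul_add_one]
            _ = _ := Finset.sum_add_distrib
        rw [hlhs, hrhs, Nat.add_comm (∑ j ∈ Finset.range M, g (h (b + j)))]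
        exact Nat.add_le_add (ih M (by omega) f hf (b + 1) (by omega))
          (ih M (by omega) g hgmono b hbM)
    · -- L = 2 * M + 1
      subst hM
      rcases Nat.eq_zero_or_pos M with rfl | hMpos
      · -- L = 1
        simp only [Nat.mul_zero, Nat.zero_add, Finset.sum_range_one, h_zero]
        exact hf (h_pos a (by omega))
      have hlhs : ∑ i ∈ Finset.range (2 * M + 1), f (h i + 1)
          = ∑ j ∈ Finset.range (M + 1), f (h j + 1)
            + ∑ j ∈ Finset.range M, g (h j + 1) :=
        calc ∑ i ∈ Finset.range (2 * M + 1), f (h i + 1)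
            = ∑ i ∈ Finset.range (2 * M), f (h i + 1) + f (h (2 * M) + 1) :=
              Finset.sum_range_succ _ _
          _ = ∑ j ∈ Finset.range M, (f (h j + 1) + g (h j + 1)) + f (h M + 1) := by
              rw [sum_range_two_mul, h_two_mul]
              congr 1
              exact Finset.sum_congr rfl fun j _ => by rw [h_two_mul, h_two_mul_add_one]
          _ = (∑ j ∈ Finset.range M, f (h j + 1) + ∑ j ∈ Finset.range M, g (h j + 1))
                + f (h M + 1) := by rw [Finset.sum_add_distrib]
          _ = _ := by rw [Finset.sum_range_succ (fun j => f (h j + 1))]; omega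
      rcases Nat.even_or_odd a with ⟨b, hb⟩ | ⟨b, hb⟩
      · -- a = 2 * b, with 2M+1 ≤ 2b hence M + 1 ≤ b
        have hab : a = 2 * b := by omega
        subst hab
        have hbM : M + 1 ≤ b := by omega
        have hrhs : ∑ i ∈ Finset.range (2 * M + 1), f (h (2 * b + i))
            = ∑ j ∈ Finset.range (M + 1), f (h (b + j))
              + ∑ j ∈ Finset.range M, g (h (b + j)) :=
          calc ∑ i ∈ Finset.range (2 * M + 1), f (h (2 * b + i))
              = ∑ i ∈ Finset.range (2 * M), f (h (2 * b + i)) + f (h (2 * b + 2 * M)) :=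
                Finset.sum_range_succ _ _
            _ = ∑ j ∈ Finset.range M, (f (h (b + j)) + g (h (b + j))) + f (h (b + M)) := by
                rw [sum_range_two_mul, show 2 * b + 2 * M = 2 * (b + M) by ring, h_two_mul]
                congr 1
                exact Finset.sum_congr rfl fun j _ => by
                  rw [show 2 * b + 2 * j = 2 * (b + j) by ring,
                    show 2 * b + (2 * j + 1) = 2 * (b + j) + 1 by ring,
                    h_two_mul, h_two_mul_add_one]
            _ = (∑ j ∈ Finset.range M, f (h (b + j)) + ∑ j ∈ Finset.range M, g (h (b + j)))
                  + f (h (b + M)) := by rw [Finset.sum_add_distrib]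
            _ = _ := by rw [Finset.sum_range_succ (fun j => f (h (b + j)))]; omega
        rw [hlhs, hrhs]
        exact Nat.add_le_add (ih (M + 1) (by omega) f hf b hbM)
          (ih M (by omega) g hgmono b (by omega))
      · -- a = 2 * b + 1, b ≥ M
        have hab : a = 2 * b + 1 := hb
        subst hab
        have hbM : M ≤ b := by omega
        have hrhs : ∑ i ∈ Finset.range (2 * M + 1), f (h (2 * b + 1 + i))
            = ∑ j ∈ Finset.range M, f (h (b + 1 + j))
              + ∑ j ∈ Finset.range (M + 1), g (h (b + j)) :=
          calc ∑ i ∈ Finset.range (2 * M + 1), f (h (2 * b + 1 + i))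
              = ∑ i ∈ Finset.range (2 * M), f (h (2 * b + 1 + i))
                  + f (h (2 * b + 1 + 2 * M)) := Finset.sum_range_succ _ _
            _ = ∑ j ∈ Finset.range M, (g (h (b + j)) + f (h (b + 1 + j))) + g (h (b + M)) := by
                rw [sum_range_two_mul,
                  show 2 * b + 1 + 2 * M = 2 * (b + M) + 1 by ring, h_two_mul_add_one]
                congr 1
                exact Finset.sum_congr rfl fun j _ => by
                  rw [show 2 * b + 1 + 2 * j = 2 * (b + j) + 1 by ring,
                    show 2 * b + 1 + (2 * j + 1) = 2 * (b + 1 + j) by ring,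
                    h_two_mul, h_two_mul_add_one]
            _ = (∑ j ∈ Finset.range M, g (h (b + j)) + ∑ j ∈ Finset.range M, f (h (b + 1 + j)))
                  + g (h (b + M)) := by rw [Finset.sum_add_distrib]
            _ = _ := by rw [Finset.sum_range_succ (fun j => g (h (b + j)))]; omega
        have hgsplit : ∑ j ∈ Finset.range (M + 1), g (h (b + j))
            = g (h b) + ∑ j ∈ Finset.range M, g (h (b + 1 + j)) := by
          rw [Finset.sum_range_succ' (fun j => g (h (b + j)))]
          have e : ∑ j ∈ Finset.range M, g (h (b + (j + 1)))
              = ∑ j ∈ Finset.range M, g (h (b + 1 + j)) :=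
            Finset.sum_congr rfl fun j _ => by rw [show b + (j + 1) = b + 1 + j by omega]
          rw [e]
          simp only [Nat.add_zero]
          omega
        have hpart2 : ∑ j ∈ Finset.range M, g (h j + 1)
            ≤ ∑ j ∈ Finset.range M, g (h (b + 1 + j)) :=
          ih M (by omega) g hgmono (b + 1) (by omega)
        have hpart1 : ∑ j ∈ Finset.range (M + 1), f (h j + 1)
            ≤ ∑ j ∈ Finset.range M, f (h (b + 1 + j)) + g (h b) := by
          rcases Nat.lt_or_ge M b with hlt | hge
          · -- b ≥ M + 1
            have hfsplit : ∑ j ∈ Finset.range (M + 1), f (h (b + j))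
                = f (h b) + ∑ j ∈ Finset.range M, f (h (b + 1 + j)) := by
              rw [Finset.sum_range_succ' (fun j => f (h (b + j)))]
              have e : ∑ j ∈ Finset.range M, f (h (b + (j + 1)))
                  = ∑ j ∈ Finset.range M, f (h (b + 1 + j)) :=
                Finset.sum_congr rfl fun j _ => by rw [show b + (j + 1) = b + 1 + j by omega]
              rw [e]
              simp only [Nat.add_zero]
              omega
            calc ∑ j ∈ Finset.range (M + 1), f (h j + 1)
                ≤ ∑ j ∈ Finset.range (M + 1), f (h (b + j)) :=
                  ih (M + 1) (by omega) f hf b (by omega)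
              _ = f (h b) + ∑ j ∈ Finset.range M, f (h (b + 1 + j)) := hfsplit
              _ ≤ ∑ j ∈ Finset.range M, f (h (b + 1 + j)) + g (h b) := by
                  have : f (h b) ≤ g (h b) := hf (by omega)
                  omega
          · -- b = M
            obtain rfl : M = b := by omega
            rw [Finset.sum_range_succ]
            refine Nat.add_le_add (ih M (by omega) f hf (M + 1) (by omega)) ?_
            exact le_rfl
        rw [hlhs, hrhs]
        calc ∑ j ∈ Finset.range (M + 1), f (h j + 1) + ∑ j ∈ Finset.range M, g (h j + 1)
            ≤ (∑ j ∈ Finset.range M, f (h (b + 1 + j)) + g (h b))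
              + ∑ j ∈ Finset.range M, g (h (b + 1 + j)) := Nat.add_le_add hpart1 hpart2
          _ = ∑ j ∈ Finset.range M, f (h (b + 1 + j))
              + (g (h b) + ∑ j ∈ Finset.range M, g (h (b + 1 + j))) := by omega
          _ = ∑ j ∈ Finset.range M, f (h (b + 1 + j))
              + ∑ j ∈ Finset.range (M + 1), g (h (b + j)) := by rw [hgsplit]

/-- For `q ≥ 1`, `k ≥ 2` and `1 ≤ k' ≤ k/2`:
`∑_{i=0}^{k'-1} (h_q i + h_{q-1} i) ≤ ∑_{j=k-k'}^{k-1} h_q j`. -/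
theorem sum_hq_add_le (q k k' : ℕ) (hql : 1 ≤ q) (hk : 2 ≤ k)
    (hk'1 : 1 ≤ k') (hk'2 : k' ≤ k / 2) :
    ∑ i ∈ Finset.range k', (hq q i + hq (q - 1) i) ≤
      ∑ j ∈ Finset.Ico (k - k') k, hq q j := by
  obtain ⟨r, rfl⟩ : ∃ r, q = r + 1 := ⟨q - 1, by omega⟩
  have hk'k : 2 * k' ≤ k := by
    have := Nat.div_mul_le_self k 2
    omega
  have hlhs : ∑ i ∈ Finset.range k', (hq (r + 1) i + hq (r + 1 - 1) i)
      = ∑ i ∈ Finset.range k', (h i + 1).choose (r + 1) := by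
    refine Finset.sum_congr rfl fun i _ => ?_
    simp only [hq, Nat.add_sub_cancel]
    rw [Nat.choose_succ_succ (h i) r]
    exact Nat.add_comm _ _
  have hrhs : ∑ j ∈ Finset.Ico (k - k') k, hq (r + 1) j
      = ∑ i ∈ Finset.range k', (h ((k - k') + i)).choose (r + 1) := by
    rw [Finset.sum_Ico_eq_sum_range]
    rw [show k - (k - k') = k' by omega]
    rfl
  rw [hlhs, hrhs]
  exact key k' (fun x => x.choose (r + 1))
    (fun x y hxy => Nat.choose_le_choose _ hxy) (k - k') (by omega)
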